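/- arXiv:1310.1204 — 3 statements merged into one kernel-verified Lean document; each statement's English description precedes it below -/
import Mathlib

section
/- If X is a random vector in ℝⁿ with log-concave distribution and T : ℝⁿ → ℝᵐ is a linear map, then T(X) has a log-concave distribution. -/
open MeasureTheory Set Pointwise

lemma aux_iSup_rpow {ι : Sort*} [Nonempty ι] (f : ι → ENNReal) {p : ℝ} (hp : 0 ≤ p) :
    (⨆ i, f i) ^ p = ⨆ i, f i ^ p := by
  rcases eq_or_lt_of_le hp with rfl | hp
  · simp
  · exact Monotone.map_iSup_of_continuousAt
      ENNReal.continuous_rpow_const.continuousAt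
      (fun x y h => ENNReal.rpow_le_rpow h hp.le)
      (by simp [ENNReal.zero_rpow_of_pos hp])

lemma aux_measure_iSup {α : Type*} [MeasurableSpace α] [TopologicalSpace α]
    (μ : Measure α) [μ.InnerRegular] {U : Set α} (hU : MeasurableSet U) :
    μ U = ⨆ K : {K : Set α // K ⊆ U ∧ IsCompact K}, μ K.1 := by
  apply le_antisymm
  · rw [hU.measure_eq_iSup_isCompact]
    exact iSup₂_le fun K hKU => iSup_le fun hK => le_iSup
      (fun K : {K : Set α // K ⊆ U ∧ IsCompact K} => μ K.1) ⟨K, hKU, hK⟩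
  · exact iSup_le fun K => measure_mono K.2.1

/-- A measure is log-concave if `μ((1-θ)A + θB) ≥ μ(A)^(1-θ) μ(B)^θ` for all
compact sets `A, B` and `θ ∈ [0,1]`. -/
def IsLogConcaveMeasure {E : Type*} [AddCommGroup E] [Module ℝ E]
    [TopologicalSpace E] [MeasurableSpace E] (μ : Measure E) : Prop :=
  ∀ A B : Set E, IsCompact A → IsCompact B → ∀ θ : ℝ, θ ∈ Set.Icc (0:ℝ) 1 →
    μ A ^ (1 - θ) * μ B ^ θ ≤ μ ((1 - θ) • A + θ • B)

/-- The image of a log-concave random vector under a linear map is log-concave. -/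
theorem linear_image_logconcave
    (n m : ℕ) (μ : Measure (Fin n → ℝ)) (hμ : IsProbabilityMeasure μ)
    (hlc : IsLogConcaveMeasure μ) (T : (Fin n → ℝ) →ₗ[ℝ] (Fin m → ℝ)) :
    IsLogConcaveMeasure (μ.map T) := by
  intro A B hA hB θ hθ
  have hTc : Continuous T := T.continuous_of_finiteDimensional
  have hTm : Measurable T := hTc.measurable
  have hC : IsCompact ((1 - θ) • A + θ • B) := (hA.smul _).add (hB.smul _)
  rw [Measure.map_apply hTm hA.isClosed.measurableSet,
      Measure.map_apply hTm hB.isClosed.measurableSet,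
      Measure.map_apply hTm hC.isClosed.measurableSet]
  -- inclusion lemma
  have key : ∀ K L : Set (Fin n → ℝ), K ⊆ T ⁻¹' A → L ⊆ T ⁻¹' B →
      (1 - θ) • K + θ • L ⊆ T ⁻¹' ((1 - θ) • A + θ • B) := by
    rintro K L hKA hLB x ⟨_, ⟨a, ha, rfl⟩, _, ⟨b, hb, rfl⟩, rfl⟩
    refine ⟨(1 - θ) • T a, Set.smul_mem_smul_set (hKA ha),
      θ • T b, Set.smul_mem_smul_set (hLB hb), ?_⟩
    simp [map_add, LinearMap.map_smul]
  haveI : Nonempty {K : Set (Fin n → ℝ) // K ⊆ T ⁻¹' A ∧ IsCompact K} :=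
    ⟨⟨∅, empty_subset _, isCompact_empty⟩⟩
  haveI : Nonempty {K : Set (Fin n → ℝ) // K ⊆ T ⁻¹' B ∧ IsCompact K} :=
    ⟨⟨∅, empty_subset _, isCompact_empty⟩⟩
  rw [aux_measure_iSup μ (hA.isClosed.measurableSet.preimage hTm),
      aux_measure_iSup μ (hB.isClosed.measurableSet.preimage hTm),
      aux_iSup_rpow _ (by linarith [hθ.2] : (0:ℝ) ≤ 1 - θ),
      aux_iSup_rpow _ hθ.1, ENNReal.iSup_mul]
  refine iSup_le fun K => ?_
  rw [ENNReal.mul_iSup]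
  refine iSup_le fun L => ?_
  calc μ K.1 ^ (1 - θ) * μ L.1 ^ θ ≤ μ ((1 - θ) • K.1 + θ • L.1) :=
        hlc K.1 L.1 K.2.2 L.2.2 θ hθ
    _ ≤ μ (T ⁻¹' ((1 - θ) • A + θ • B)) := measure_mono (key K.1 L.1 K.2.1 L.2.1)
end

section
/- Let u₁, …, u_N be points in the unit sphere of ℝⁿ with N ≥ n. Then (Vol(conv{±u₁, …, ±u_N}) / Vol(B₂ⁿ))^{1/n} ≤ C √(log(1 + N/n)/n) for a universal constant C. -/
/-!
Maurey's empirical method. If `x` lies in the convex hull of a set `S` contained in the unit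
ball, then greedily choosing `y₁, …, y_k ∈ S` keeps `‖k x - (y₁ + ⋯ + y_k)‖² ≤ k`, so `x` is within
`1 / √k` of the mean of a multiset of `k` points of `S`. Hence `conv S` is covered by at most
`C(|S| + k, k)` balls of radius `1 / √k`. For `S = {±uᵢ}` we have `|S| ≤ 2N`, and any `k` between
`n / log (1 + N / n)` and twice that makes `C(2N + k, k) ≤ (e (2N + k) / k) ^ k ≤ e^{10 n}`, which
gives the bound with `C = e^{10}`. When `log (1 + N / n) ≥ n` the trivial bound `conv S ⊆ B₂ⁿ` suffices.
-/

open MeasureTheory Metric Module Real Finset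
open scoped ENNReal RealInnerProductSpace

section Maurey

variable {E : Type*} [NormedAddCommGroup E] [InnerProductSpace ℝ E]

theorem exists_mem_norm_sub_sq_le_add_one {s : Set E} (hs : s ⊆ closedBall 0 1) {x : E}
    (hx : x ∈ convexHull ℝ s) (a : E) : ∃ y ∈ s, ‖a - y‖ ^ 2 ≤ ‖a - x‖ ^ 2 + 1 := by
  -- `‖a - y‖ ^ 2 - ‖y‖ ^ 2 = ‖a‖ ^ 2 - 2 ⟪a, y⟫` is affine in `y`, hence minimised on `s`.
  obtain ⟨y, hys, hy⟩ := ConcaveOn.exists_le_of_mem_convexHull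
    (((-2 : ℝ) • innerₛₗ ℝ a).concaveOn convex_univ) (Set.subset_univ s) hx
  have hy1 : ‖y‖ ≤ 1 := by simpa using hs hys
  simp only [LinearMap.smul_apply, innerₛₗ_apply_apply, smul_eq_mul] at hy
  refine ⟨y, hys, ?_⟩
  rw [norm_sub_sq_real, norm_sub_sq_real]
  nlinarith [norm_nonneg y, sq_nonneg ‖x‖]

theorem exists_sym_norm_nsmul_sub_sum_sq_le {s : Set E} (hs : s ⊆ closedBall 0 1) {x : E}
    (hx : x ∈ convexHull ℝ s) (k : ℕ) :
    ∃ m : Sym s k, ‖(k : ℝ) • x - ((m : Multiset s).map (↑)).sum‖ ^ 2 ≤ k := by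
  induction k with
  | zero => exact ⟨Sym.nil, by simp⟩
  | succ k ih =>
    obtain ⟨m, hm⟩ := ih
    obtain ⟨y, hys, hy⟩ :=
      exists_mem_norm_sub_sq_le_add_one hs hx ((k : ℝ) • x - ((m : Multiset s).map (↑)).sum + x)
    refine ⟨⟨y, hys⟩ ::ₛ m, ?_⟩
    simp only [Sym.coe_cons, Multiset.map_cons, Multiset.sum_cons, add_sub_cancel_right] at hy ⊢
    have hrearrange : ((k + 1 : ℕ) : ℝ) • x - (y + ((m : Multiset s).map (↑)).sum)
        = (k : ℝ) • x - ((m : Multiset s).map (↑)).sum + x - y := by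
      push_cast; module
    push_cast at hrearrange ⊢
    rw [hrearrange]
    linarith

theorem convexHull_subset_iUnion_closedBall_sym {s : Set E} (hs : s ⊆ closedBall 0 1) {k : ℕ}
    (hk : k ≠ 0) :
    convexHull ℝ s ⊆
      ⋃ m : Sym s k, closedBall ((k : ℝ)⁻¹ • ((m : Multiset s).map (↑)).sum) (√k)⁻¹ := by
  intro x hx
  obtain ⟨m, hm⟩ := exists_sym_norm_nsmul_sub_sum_sq_le hs hx k
  have hk0 : (0 : ℝ) < k := by positivity
  refine Set.mem_iUnion.2 ⟨m, ?_⟩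
  rw [mem_closedBall, dist_eq_norm]
  calc ‖x - (k : ℝ)⁻¹ • ((m : Multiset s).map (↑)).sum‖
      = (k : ℝ)⁻¹ * ‖(k : ℝ) • x - ((m : Multiset s).map (↑)).sum‖ := by
        rw [← abs_of_pos (inv_pos.2 hk0), ← Real.norm_eq_abs, ← norm_smul, smul_sub,
          inv_smul_smul₀ hk0.ne', Real.norm_eq_abs, abs_of_pos (inv_pos.2 hk0)]
    _ ≤ (k : ℝ)⁻¹ * √k := by gcongr; exact Real.le_sqrt_of_sq_le hm
    _ = (√k)⁻¹ := by rw [inv_mul_eq_div, Real.sqrt_div_self]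

end Maurey

theorem Nat.choose_le_exp_one_mul_div_pow (n k : ℕ) : (n.choose k : ℝ) ≤ (exp 1 * n / k) ^ k := by
  rcases eq_or_ne k 0 with rfl | hk
  · simp
  have hk0 : (0 : ℝ) < k := by positivity
  calc (n.choose k : ℝ) ≤ n ^ k / k.factorial := Nat.choose_le_pow_div k n
    _ = (n / k : ℝ) ^ k * (k ^ k / k.factorial) := by
        rw [div_pow, div_mul_div_cancel₀ (pow_ne_zero k hk0.ne')]
    _ ≤ (n / k : ℝ) ^ k * exp k := by gcongr; exact Real.pow_div_factorial_le_exp _ hk0.le k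
    _ = (exp 1 * n / k) ^ k := by rw [← Real.exp_one_pow, mul_div_assoc, mul_pow, mul_comm]

theorem one_add_two_mul_mul_log_le_pow_three {t : ℝ} (ht : 0 ≤ t) :
    1 + 2 * t * log (1 + t) ≤ (1 + t) ^ 3 := by
  have hlog : log (1 + t) ≤ t := by linarith [Real.log_le_sub_one_of_pos (by linarith : 0 < 1 + t)]
  have hlog0 : 0 ≤ log (1 + t) := Real.log_nonneg (by linarith)
  nlinarith [mul_le_mul_of_nonneg_left hlog ht]

theorem choose_two_mul_add_le_exp {n N k : ℕ} (hn : 0 < n) (hnN : n ≤ N)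
    (hk₁ : n / log (1 + N / n) ≤ k) (hk₂ : k ≤ 2 * (n / log (1 + N / n))) :
    ((2 * N + k).choose k : ℝ) ≤ exp (10 * n) := by
  set t : ℝ := N / n
  set L := log (1 + t)
  have hn0 : (0 : ℝ) < n := by exact_mod_cast hn
  have ht : 1 ≤ t := by rw [le_div_iff₀ hn0, one_mul]; exact_mod_cast hnN
  have hL : 1 / 2 ≤ L := by
    have := Real.log_le_log two_pos (by linarith : (2 : ℝ) ≤ 1 + t)
    linarith [Real.log_two_gt_d9]
  have hk0 : (0 : ℝ) < k := lt_of_lt_of_le (by positivity) hk₁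
  have hnk : n ≤ L * k := by rwa [div_le_iff₀ (by linarith), mul_comm] at hk₁
  have hkn : k * L ≤ 2 * n := by rwa [← mul_div_assoc, le_div_iff₀ (by linarith)] at hk₂
  have hNk : 2 * (N : ℝ) / k ≤ 2 * t * L := by
    rw [div_le_iff₀ hk0, show (N : ℝ) = t * n by simp only [t]; field_simp]
    nlinarith
  have hexpL : exp (3 * L) = (1 + t) ^ 3 := by
    rw [mul_comm, Real.exp_mul, Real.exp_log (by linarith)]; norm_cast
  calc ((2 * N + k).choose k : ℝ)
      ≤ (exp 1 * (2 * N + k : ℕ) / k) ^ k := Nat.choose_le_exp_one_mul_div_pow _ _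
    _ = (exp 1 * (1 + 2 * N / k)) ^ k := by push_cast; field_simp; ring
    _ ≤ (exp 1 * exp (3 * L)) ^ k := by
        gcongr
        rw [hexpL]
        linarith [one_add_two_mul_mul_log_le_pow_three (by linarith : 0 ≤ t)]
    _ = exp (k * (1 + 3 * L)) := by rw [← Real.exp_add, ← Real.exp_nat_mul]
    _ ≤ exp (10 * n) := Real.exp_le_exp.2 (by nlinarith)

theorem exists_nat_le_le_two_mul {x : ℝ} (hx : 1 ≤ x) : ∃ k : ℕ, x ≤ k ∧ (k : ℝ) ≤ 2 * x :=
  ⟨⌈x⌉₊, Nat.le_ceil x, by linarith [Nat.ceil_lt_add_one (zero_le_one.trans hx)]⟩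

theorem ENNReal.rpow_one_div_le_of_le_ofReal_mul_pow {a : ℝ≥0∞} {c r : ℝ} {n : ℕ} (hn : n ≠ 0)
    (hc : 0 ≤ c) (hr : 0 ≤ r) (h : a ≤ ENNReal.ofReal (c * r ^ n)) :
    a ^ ((1 : ℝ) / n) ≤ ENNReal.ofReal (c ^ ((1 : ℝ) / n) * r) := by
  have hr' : (r ^ n) ^ ((1 : ℝ) / n) = r := by
    rw [← Real.rpow_natCast, ← Real.rpow_mul hr, mul_one_div_cancel (by positivity),
      Real.rpow_one]
  calc a ^ ((1 : ℝ) / n) ≤ ENNReal.ofReal (c * r ^ n) ^ ((1 : ℝ) / n) := by gcongr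
    _ = ENNReal.ofReal (c ^ ((1 : ℝ) / n) * r) := by
        rw [ENNReal.ofReal_rpow_of_nonneg (by positivity) (by positivity),
          Real.mul_rpow hc (by positivity), hr']

section NormedSpace

variable {E : Type*} [NormedAddCommGroup E] [NormedSpace ℝ E] [FiniteDimensional ℝ E]
  [MeasurableSpace E] [BorelSpace E] (μ : Measure E) [μ.IsAddHaarMeasure]

theorem measure_convexHull_le_measure_ball {s : Set E} (hs : s ⊆ closedBall 0 1) :
    μ (convexHull ℝ s) ≤ μ (ball 0 1) := by
  calc μ (convexHull ℝ s) ≤ μ (closedBall 0 1) :=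
        measure_mono (convexHull_min hs (convex_closedBall 0 1))
    _ = μ (ball 0 1) := by simp [Measure.addHaar_closedBall μ (0 : E) zero_le_one]

end NormedSpace

section InnerProductSpace

variable {E : Type*} [NormedAddCommGroup E] [InnerProductSpace ℝ E] [FiniteDimensional ℝ E]
  [MeasurableSpace E] [BorelSpace E] (μ : Measure E) [μ.IsAddHaarMeasure]

theorem measure_convexHull_le_choose_mul {s : Finset E} (hs : ↑s ⊆ closedBall (0 : E) 1) {k : ℕ}
    (hk : k ≠ 0) :
    μ (convexHull ℝ ↑s) ≤
      ((#s + k).choose k : ℝ≥0∞) * ENNReal.ofReal ((√k)⁻¹ ^ finrank ℝ E) * μ (ball 0 1) := by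
  classical
  have hcard : Fintype.card (Sym (↑s : Set E) k) ≤ (#s + k).choose k := by
    rw [Sym.card_sym_eq_choose]
    exact Nat.choose_le_choose k (by simp only [Finset.coe_sort_coe, Fintype.card_coe]; omega)
  calc μ (convexHull ℝ ↑s)
      ≤ μ (⋃ m : Sym (↑s : Set E) k,
          closedBall ((k : ℝ)⁻¹ • ((m : Multiset (↑s : Set E)).map (↑)).sum) (√k)⁻¹) :=
        measure_mono (convexHull_subset_iUnion_closedBall_sym hs hk)
    _ ≤ ∑ m : Sym (↑s : Set E) k,
          μ (closedBall ((k : ℝ)⁻¹ • ((m : Multiset (↑s : Set E)).map (↑)).sum) (√k)⁻¹) :=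
        measure_iUnion_fintype_le _ _
    _ = Fintype.card (Sym (↑s : Set E) k) *
          (ENNReal.ofReal ((√k)⁻¹ ^ finrank ℝ E) * μ (ball 0 1)) := by
        simp only [Measure.addHaar_closedBall μ _ (inv_nonneg.2 (Real.sqrt_nonneg _)),
          Finset.sum_const, Finset.card_univ, nsmul_eq_mul]
    _ ≤ ((#s + k).choose k : ℝ≥0∞) * ENNReal.ofReal ((√k)⁻¹ ^ finrank ℝ E) * μ (ball 0 1) := by
        rw [mul_assoc]; gcongr

theorem measure_convexHull_div_measure_ball_rpow_le {n N : ℕ} (hE : finrank ℝ E = n) (hn : 0 < n)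
    (hnN : n ≤ N) {s : Finset E} (hs : ↑s ⊆ closedBall (0 : E) 1) (hsN : #s ≤ 2 * N) :
    (μ (convexHull ℝ ↑s) / μ (ball 0 1)) ^ ((1 : ℝ) / n) ≤
      ENNReal.ofReal (exp 10 * √(log (1 + N / n) / n)) := by
  set L := log (1 + N / n)
  have hn0 : (0 : ℝ) < n := by exact_mod_cast hn
  have hN0 : (0 : ℝ) < N := by exact_mod_cast hn.trans_le hnN
  have hL0 : 0 < L := Real.log_pos (lt_add_of_pos_right 1 (div_pos hN0 hn0))
  have hball0 : μ (ball 0 1) ≠ 0 := (measure_ball_pos μ 0 one_pos).ne'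
  have hball : μ (ball 0 1) ≠ ⊤ := measure_ball_lt_top.ne
  rcases le_or_gt (n : ℝ) L with hLn | hLn
  · have hratio : μ (convexHull ℝ ↑s) / μ (ball 0 1) ≤ 1 :=
      ENNReal.div_le_of_le_mul (by simpa using measure_convexHull_le_measure_ball μ hs)
    have hsqrt : 1 ≤ √(L / n) := Real.one_le_sqrt.2 ((one_le_div hn0).2 hLn)
    calc (μ (convexHull ℝ ↑s) / μ (ball 0 1)) ^ ((1 : ℝ) / n) ≤ 1 :=
          ENNReal.rpow_le_one hratio (by positivity)
      _ ≤ ENNReal.ofReal (exp 10 * √(L / n)) := by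
          rw [ENNReal.one_le_ofReal]; nlinarith [Real.one_le_exp (by norm_num : (0 : ℝ) ≤ 10)]
  obtain ⟨k, hk₁, hk₂⟩ := exists_nat_le_le_two_mul ((one_le_div hL0).2 hLn.le)
  have hk0 : k ≠ 0 := by exact_mod_cast ((div_pos hn0 hL0).trans_le hk₁).ne'
  have hratio : μ (convexHull ℝ ↑s) / μ (ball 0 1) ≤
      ENNReal.ofReal (((2 * N + k).choose k : ℕ) * (√k)⁻¹ ^ n) := by
    rw [ENNReal.div_le_iff hball0 hball, ENNReal.ofReal_mul (by positivity),
      ENNReal.ofReal_natCast, ← hE]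
    refine (measure_convexHull_le_choose_mul μ hs hk0).trans ?_
    gcongr
  have hchoose := choose_two_mul_add_le_exp hn hnN hk₁ hk₂
  refine (ENNReal.rpow_one_div_le_of_le_ofReal_mul_pow hn.ne' (by positivity) (by positivity)
    hratio).trans (ENNReal.ofReal_le_ofReal (mul_le_mul ?_ ?_ (by positivity) (by positivity)))
  · calc (((2 * N + k).choose k : ℕ) : ℝ) ^ ((1 : ℝ) / n) ≤ exp (10 * n) ^ ((1 : ℝ) / n) := by
          gcongr
      _ = exp 10 := by rw [← Real.exp_mul, mul_assoc, mul_one_div_cancel hn0.ne', mul_one]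
  · rw [← Real.sqrt_inv, ← inv_div]
    exact Real.sqrt_le_sqrt (inv_anti₀ (div_pos hn0 hL0) hk₁)

end InnerProductSpace

/-- Carl–Pajor / Gluskin / Bárány–Füredi volume bound: for `N ≥ n` points on the unit
sphere of `ℝⁿ`, `(Vol(conv{±u₁,…,±u_N}) / Vol(B₂ⁿ))^{1/n} ≤ C √(log(1 + N/n)/n)`. -/
theorem volume_absconv_points_on_sphere :
    ∃ C : ℝ, 0 < C ∧ ∀ (n N : ℕ), 0 < n → n ≤ N →
      ∀ u : Fin N → EuclideanSpace ℝ (Fin n), (∀ i, ‖u i‖ = 1) →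
        (volume (convexHull ℝ (Set.range u ∪ Set.range (fun i => -u i))) /
            volume (Metric.ball (0 : EuclideanSpace ℝ (Fin n)) 1)) ^ ((1 : ℝ) / n)
          ≤ ENNReal.ofReal (C * Real.sqrt (Real.log (1 + (N : ℝ) / n) / n)) := by
  classical
  refine ⟨exp 10, exp_pos 10, fun n N hn hnN u hu => ?_⟩
  set s : Finset (EuclideanSpace ℝ (Fin n)) := univ.image u ∪ univ.image (fun i => -u i)
  have hs_coe : (↑s : Set (EuclideanSpace ℝ (Fin n))) =
      Set.range u ∪ Set.range (fun i => -u i) := by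
    simp [s]
  have hs : (↑s : Set (EuclideanSpace ℝ (Fin n))) ⊆ closedBall 0 1 := by
    rw [hs_coe]
    rintro _ (⟨i, rfl⟩ | ⟨i, rfl⟩) <;> simp [hu i]
  have hsN : #s ≤ 2 * N := by
    calc #s ≤ #(univ.image u) + #(univ.image (fun i => -u i)) := card_union_le _ _
      _ ≤ N + N := by gcongr <;> exact card_image_le.trans (by simp)
      _ = 2 * N := by ring
  rw [← hs_coe]
  exact measure_convexHull_div_measure_ball_rpow_le volume finrank_euclideanSpace_fin hn hnN hs hsN
end

section
/- A Cheeger inequality implies an exponential concentration inequality: if μ is a probability measure on ℝⁿ with μ⁺(S) ≥ h·min(μ(S), 1−μ(S)) for all Borel sets S, then for any Borel set A with μ(A) ≥ 1/2 and any t > 0, μ(A + tB₂ⁿ) ≥ 1 − e^{-c·h·t} for a universal constant c > 0. -/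
set_option maxHeartbeats 1000000


open MeasureTheory Set Pointwise Filter Topology

/-- The boundary measure (Minkowski content) of a set `S` with respect to `μ`:
`μ⁺(S) = liminf_{ε→0⁺} (μ(S + εB₂ⁿ) − μ(S))/ε`. -/
noncomputable def boundaryMeasure {E : Type*} [NormedAddCommGroup E] [NormedSpace ℝ E]
    [MeasurableSpace E] (μ : Measure E) (S : Set E) : ℝ :=
  Filter.liminf (fun ε : ℝ =>
      ((μ (S + ε • Metric.closedBall (0 : E) 1)).toReal - (μ S).toReal) / ε)
    (nhdsWithin 0 (Set.Ioi 0))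


lemma key_ode {G : ℝ → ℝ} {h : ℝ} (hh : 0 < h)
    (hmono : ∀ s t : ℝ, 0 ≤ s → s ≤ t → G t ≤ G s)
    (hnn : ∀ t : ℝ, 0 ≤ t → 0 ≤ G t)
    (hD : ∀ u : ℝ, 0 ≤ u → ∀ b : ℝ, b < h * G u →
      ∀ᶠ ε in nhdsWithin 0 (Set.Ioi 0), b < (G u - G (u + ε)) / ε) :
    ∀ t : ℝ, 0 ≤ t → G t ≤ G 0 * Real.exp (-(h / 2 * t)) := by
  set l : ℝ := h / 2 with hl
  have hlpos : 0 < l := by positivity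
  have main : ∀ δ : ℝ, 0 < δ → ∀ t : ℝ, 0 ≤ t →
      G t * Real.exp (l * t) ≤ G 0 + δ * (1 + t) := by
    intro δ hδ
    by_contra hcon
    push_neg at hcon
    obtain ⟨t₀, ht₀, hbad₀⟩ := hcon
    set bad : Set ℝ := {t | 0 ≤ t ∧ G 0 + δ * (1 + t) < G t * Real.exp (l * t)} with hbaddef
    have hbne : bad.Nonempty := ⟨t₀, ht₀, hbad₀⟩
    have hbdd : BddBelow bad := ⟨0, fun x hx => hx.1⟩
    set u : ℝ := sInf bad with hu
    have hu0 : 0 ≤ u := le_csInf hbne fun x hx => hx.1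
    have hgood : ∀ s : ℝ, 0 ≤ s → s < u → G s * Real.exp (l * s) ≤ G 0 + δ * (1 + s) := by
      intro s hs hsu
      by_contra hc
      push_neg at hc
      exact absurd (csInf_le hbdd ⟨hs, hc⟩) (not_le.mpr hsu)
    -- Step A : u itself is good
    have hugood : G u * Real.exp (l * u) ≤ G 0 + δ * (1 + u) := by
      rcases eq_or_lt_of_le hu0 with h0 | h0
      · rw [← h0]
        simp only [mul_zero, Real.exp_zero, mul_one]
        nlinarith [hδ]
      · have htend : Tendsto (fun s : ℝ => (G 0 + δ * (1 + s)) * Real.exp (-(l * s)))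
            (nhdsWithin u (Set.Iio u)) (𝓝 ((G 0 + δ * (1 + u)) * Real.exp (-(l * u)))) := by
          apply Tendsto.mono_left _ nhdsWithin_le_nhds
          exact (Continuous.tendsto (by continuity) u)
        have hev : ∀ᶠ s in nhdsWithin u (Set.Iio u),
            G u ≤ (G 0 + δ * (1 + s)) * Real.exp (-(l * s)) := by
          filter_upwards [Ioo_mem_nhdsLT_of_mem (⟨h0, le_refl u⟩ : u ∈ Set.Ioc (0:ℝ) u)]
            with s hs
          have h1 : G u ≤ G s := hmono s u hs.1.le hs.2.le
          have h2 : G s * Real.exp (l * s) ≤ G 0 + δ * (1 + s) := hgood s hs.1.le hs.2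
          have h3 : G s ≤ (G 0 + δ * (1 + s)) / Real.exp (l * s) :=
            (le_div_iff₀ (Real.exp_pos _)).mpr h2
          rw [Real.exp_neg, ← div_eq_mul_inv]
          linarith
        have h4 := ge_of_tendsto htend hev
        rw [Real.exp_neg, ← div_eq_mul_inv] at h4
        exact (le_div_iff₀ (Real.exp_pos _)).mp h4
    -- Step B : points slightly to the right of u are good, contradiction
    set δ' : ℝ := δ * Real.exp (-(l * (u + 1))) with hδ'
    have hδ'pos : 0 < δ' := by positivity
    have hbev := hD u hu0 (h * G u - δ') (by linarith)
    have hIoo : Set.Ioo (0:ℝ) 1 ∈ nhdsWithin (0:ℝ) (Set.Ioi 0) :=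
      Ioo_mem_nhdsGT_of_mem ⟨le_refl 0, one_pos⟩
    have hevgood : ∀ᶠ ε in nhdsWithin (0:ℝ) (Set.Ioi 0), (u + ε) ∉ bad := by
      filter_upwards [hbev, hIoo] with ε hε hε1
      intro hmem
      have hεpos : 0 < ε := hε1.1
      have hGu : 0 ≤ G u := hnn u hu0
      have hstep : G (u + ε) < G u - ε * (h * G u - δ') := by
        have := (lt_div_iff₀ hεpos).mp hε
        nlinarith
      have hE : G (u + ε) * Real.exp (l * (u + ε))
          ≤ (G u * (1 - ε * h) + ε * δ') * Real.exp (l * (u + ε)) := by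
        apply mul_le_mul_of_nonneg_right _ (Real.exp_pos _).le
        nlinarith [hstep]
      have hterm1 : G u * (1 - ε * h) * Real.exp (l * (u + ε)) ≤ G u * Real.exp (l * u) := by
        have hsplit : Real.exp (l * (u + ε)) = Real.exp (l * u) * Real.exp (l * ε) := by
          rw [← Real.exp_add]; ring_nf
        rw [hsplit]
        have h1 : (1 - ε * h) ≤ Real.exp (-(ε * h)) := by
          have := Real.add_one_le_exp (-(ε * h)); linarith
        have h2 : (1 - ε * h) * Real.exp (l * ε) ≤ Real.exp (-(ε * h)) * Real.exp (l * ε) :=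
          mul_le_mul_of_nonneg_right h1 (Real.exp_pos _).le
        have h3 : Real.exp (-(ε * h)) * Real.exp (l * ε) = Real.exp (-(l * ε)) := by
          rw [← Real.exp_add]; congr 1; rw [hl]; ring
        have h4 : Real.exp (-(l * ε)) ≤ 1 := by
          rw [Real.exp_le_one_iff]
          nlinarith
        calc G u * (1 - ε * h) * (Real.exp (l * u) * Real.exp (l * ε))
            = G u * ((1 - ε * h) * Real.exp (l * ε)) * Real.exp (l * u) := by ring
          _ ≤ G u * Real.exp (-(l * ε)) * Real.exp (l * u) := by
              apply mul_le_mul_of_nonneg_right _ (Real.exp_pos _).le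
              exact mul_le_mul_of_nonneg_left (h2.trans_eq h3) hGu
          _ ≤ G u * 1 * Real.exp (l * u) := by
              apply mul_le_mul_of_nonneg_right _ (Real.exp_pos _).le
              exact mul_le_mul_of_nonneg_left h4 hGu
          _ = G u * Real.exp (l * u) := by ring
      have hterm2 : ε * δ' * Real.exp (l * (u + ε)) ≤ ε * δ := by
        rw [hδ']
        have hle1 : Real.exp (-(l * (u + 1))) * Real.exp (l * (u + ε)) ≤ 1 := by
          rw [← Real.exp_add, Real.exp_le_one_iff]
          nlinarith [hε1.2, hlpos]
        calc ε * (δ * Real.exp (-(l * (u + 1)))) * Real.exp (l * (u + ε))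
            = ε * δ * (Real.exp (-(l * (u + 1))) * Real.exp (l * (u + ε))) := by ring
          _ ≤ ε * δ * 1 := by
              apply mul_le_mul_of_nonneg_left hle1 (by positivity)
          _ = ε * δ := by ring
      have hfinal : G (u + ε) * Real.exp (l * (u + ε)) ≤ G 0 + δ * (1 + (u + ε)) := by
        have expand : (G u * (1 - ε * h) + ε * δ') * Real.exp (l * (u + ε))
            = G u * (1 - ε * h) * Real.exp (l * (u + ε))
              + ε * δ' * Real.exp (l * (u + ε)) := by ring
        rw [expand] at hE
        have hring : δ * (1 + (u + ε)) = δ * (1 + u) + ε * δ := by ring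
        linarith [hugood, hterm1, hterm2]
      exact absurd hmem.2 (not_lt.mpr hfinal)
    obtain ⟨ε₀, hε₀u, hsub⟩ := mem_nhdsGT_iff_exists_Ioo_subset.mp hevgood
    have hlt : sInf bad < u + ε₀ := by
      rw [← hu]; linarith [mem_Ioi.mp hε₀u]
    obtain ⟨x, hxbad, hxlt⟩ := exists_lt_of_csInf_lt hbne hlt
    have hux : u ≤ x := csInf_le hbdd hxbad
    have hxneu : x ≠ u := by
      intro hxu
      rw [hxu] at hxbad
      exact absurd hxbad.2 (not_lt.mpr hugood)
    have huxlt : u < x := lt_of_le_of_ne hux (Ne.symm hxneu)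
    have hxmem : x - u ∈ Set.Ioo (0:ℝ) ε₀ := ⟨by linarith, by linarith⟩
    have hnot : u + (x - u) ∉ bad := hsub hxmem
    rw [add_sub_cancel] at hnot
    exact hnot hxbad
  -- conclude
  intro t ht
  have h1 : G t * Real.exp (l * t) ≤ G 0 := by
    apply le_of_forall_pos_le_add
    intro ε hε
    have h2 := main (ε / (1 + t)) (by positivity) t ht
    have h1t : (0:ℝ) < 1 + t := by linarith
    calc G t * Real.exp (l * t) ≤ G 0 + ε / (1 + t) * (1 + t) := h2
      _ = G 0 + ε := by field_simp
  calc G t = G t * Real.exp (l * t) * Real.exp (-(l * t)) := by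
        rw [mul_assoc, ← Real.exp_add, add_neg_cancel, Real.exp_zero, mul_one]
    _ ≤ G 0 * Real.exp (-(l * t)) := mul_le_mul_of_nonneg_right h1 (Real.exp_pos _).le


/-- A Cheeger inequality implies exponential concentration: if
`μ⁺(S) ≥ h·min(μ(S), 1−μ(S))` for all Borel `S`, then for every Borel `A` with
`μ(A) ≥ 1/2` and `t > 0`, `μ(A + tB₂ⁿ) ≥ 1 − e^{−c h t}`. -/
theorem cheeger_implies_exponential_concentration :
    ∃ c : ℝ, 0 < c ∧ ∀ (n : ℕ) (μ : Measure (EuclideanSpace ℝ (Fin n))),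
      IsProbabilityMeasure μ → ∀ h : ℝ, 0 < h →
      (∀ S : Set (EuclideanSpace ℝ (Fin n)), MeasurableSet S →
        h * min (μ S).toReal (1 - (μ S).toReal) ≤ boundaryMeasure μ S) →
      ∀ A : Set (EuclideanSpace ℝ (Fin n)), MeasurableSet A →
        (1 : ℝ) / 2 ≤ (μ A).toReal → ∀ t : ℝ, 0 < t →
          1 - Real.exp (-(c * h * t))
            ≤ (μ (A + t • Metric.closedBall (0 : EuclideanSpace ℝ (Fin n)) 1)).toReal := by
  refine ⟨1/2, by norm_num, ?_⟩
  intro n μ hprob h hh hcheeger A hA hA2 t ht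
  -- basic measure facts
  have htr : ∀ S T : Set (EuclideanSpace ℝ (Fin n)), S ⊆ T → (μ S).toReal ≤ (μ T).toReal := fun S T hST =>
    ENNReal.toReal_mono (measure_ne_top μ T) (measure_mono hST)
  have hle1 : ∀ S : Set (EuclideanSpace ℝ (Fin n)), (μ S).toReal ≤ 1 := fun S => by
    have := ENNReal.toReal_mono (by simp) (prob_le_one (μ := μ) (s := S))
    simpa using this
  have hhalf : ∀ u : ℝ, (1:ℝ)/2 ≤ (μ (Metric.cthickening u A)).toReal := fun u =>
    le_trans hA2 (htr _ _ (Metric.self_subset_cthickening A))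
  -- the key comparison function
  have hkey : ∀ s : ℝ, 0 ≤ s →
      (fun s : ℝ => 1 - (μ (Metric.cthickening s A)).toReal) s
        ≤ (fun s : ℝ => 1 - (μ (Metric.cthickening s A)).toReal) 0
          * Real.exp (-(h / 2 * s)) := by
    apply key_ode hh
    · intro s u hs hsu
      have := htr _ _ (Metric.cthickening_mono hsu A)
      linarith
    · intro s hs
      linarith [hle1 (Metric.cthickening s A)]
    · intro u hu b hb
      set S : Set (EuclideanSpace ℝ (Fin n)) := Metric.cthickening u A with hS
      have hSmeas : MeasurableSet S := Metric.isClosed_cthickening.measurableSet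
      have hSge : (1:ℝ)/2 ≤ (μ S).toReal := hhalf u
      have hch := hcheeger S hSmeas
      rw [min_eq_right (by linarith : 1 - (μ S).toReal ≤ (μ S).toReal)] at hch
      set q : ℝ → ℝ := fun ε =>
        ((μ (S + ε • Metric.closedBall (0 : EuclideanSpace ℝ (Fin n)) 1)).toReal - (μ S).toReal) / ε with hq
      have hbm : boundaryMeasure μ S = Filter.liminf q (nhdsWithin 0 (Set.Ioi 0)) := by
        rw [hq]; rfl
      -- q is eventually nonnegative
      have hsub : ∀ ε : ℝ, 0 < ε → S ⊆ S + ε • Metric.closedBall (0 : EuclideanSpace ℝ (Fin n)) 1 := by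
        intro ε hε x hx
        refine Set.mem_add.mpr ⟨x, hx, 0, ?_, add_zero x⟩
        exact ⟨0, by simp, by simp⟩
      have hq0 : ∀ᶠ ε in nhdsWithin (0:ℝ) (Set.Ioi 0), 0 ≤ q ε := by
        filter_upwards [self_mem_nhdsWithin] with ε hε
        have hεpos : (0:ℝ) < ε := hε
        apply div_nonneg _ hεpos.le
        have := htr _ _ (hsub ε hεpos)
        linarith
      -- q is eventually dominated by the difference quotient of G
      have hincl : ∀ ε : ℝ, 0 < ε →
          S + ε • Metric.closedBall (0 : EuclideanSpace ℝ (Fin n)) 1 ⊆ Metric.cthickening (u + ε) A := by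
        intro ε hε x hx
        obtain ⟨s, hs, y, hy, rfl⟩ := Set.mem_add.mp hx
        obtain ⟨z, hz, rfl⟩ := Set.mem_smul_set.mp hy
        rw [Metric.mem_cthickening_iff]
        have h1 : EMetric.infEdist (s + ε • z) A
            ≤ EMetric.infEdist s A + edist (s + ε • z) s :=
          EMetric.infEdist_le_infEdist_add_edist
        have h2 : EMetric.infEdist s A ≤ ENNReal.ofReal u := Metric.mem_cthickening_iff.mp hs
        have h3 : edist (s + ε • z) s ≤ ENNReal.ofReal ε := by
          rw [edist_dist]
          apply ENNReal.ofReal_le_ofReal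
          rw [dist_eq_norm, add_sub_cancel_left, norm_smul, Real.norm_eq_abs,
            abs_of_pos hε]
          have hz1 : ‖z‖ ≤ 1 := by simpa using Metric.mem_closedBall.mp hz
          nlinarith
        calc EMetric.infEdist (s + ε • z) A
            ≤ ENNReal.ofReal u + ENNReal.ofReal ε := le_trans h1 (add_le_add h2 h3)
          _ = ENNReal.ofReal (u + ε) := (ENNReal.ofReal_add hu hε.le).symm
      have hqr : ∀ᶠ ε in nhdsWithin (0:ℝ) (Set.Ioi 0), q ε ≤
          ((1 - (μ (Metric.cthickening u A)).toReal)
            - (1 - (μ (Metric.cthickening (u + ε) A)).toReal)) / ε := by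
        filter_upwards [self_mem_nhdsWithin] with ε hε
        have hεpos : (0:ℝ) < ε := hε
        have hnum := htr _ _ (hincl ε hεpos)
        have heq : (1 - (μ (Metric.cthickening u A)).toReal)
            - (1 - (μ (Metric.cthickening (u + ε) A)).toReal)
            = (μ (Metric.cthickening (u + ε) A)).toReal - (μ S).toReal := by
          rw [hS]; ring
        rw [heq]
        exact div_le_div_of_nonneg_right (by linarith) hεpos.le
      -- extract an eventual lower bound from the liminf
      set Sq : Set ℝ := {a | ∀ᶠ ε in nhdsWithin (0:ℝ) (Set.Ioi 0), a ≤ q ε} with hSq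
      have hbsup : b < sSup Sq := by
        have : Filter.liminf q (nhdsWithin 0 (Set.Ioi 0)) = sSup Sq := Filter.liminf_eq
        rw [← this]
        calc b < h * (1 - (μ S).toReal) := hb
          _ ≤ _ := hbm ▸ hch
      obtain ⟨a, haSq, hba⟩ : ∃ a ∈ Sq, b < a := by
        by_cases hbdd : BddAbove Sq
        · exact exists_lt_of_lt_csSup ⟨0, hq0⟩ hbsup
        · obtain ⟨a, haSq, hba⟩ := not_bddAbove_iff.mp hbdd b
          exact ⟨a, haSq, hba⟩
      filter_upwards [haSq, hqr] with ε h1 h2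
      calc b < a := hba
        _ ≤ q ε := h1
        _ ≤ _ := h2
  -- conclude via a left limit at t
  have hG0 : 1 - (μ (Metric.cthickening 0 A)).toReal ≤ 1 := by
    linarith [ENNReal.toReal_nonneg (a := μ (Metric.cthickening 0 A))]
  have hsup : ∀ s : ℝ, 0 ≤ s → s < t →
      1 - Real.exp (-(h / 2 * s))
        ≤ (μ (A + t • Metric.closedBall (0 : EuclideanSpace ℝ (Fin n)) 1)).toReal := by
    intro s hs hst
    have hincl2 : Metric.cthickening s A ⊆ A + t • Metric.closedBall (0 : EuclideanSpace ℝ (Fin n)) 1 := by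
      intro x hx
      have h1 : EMetric.infEdist x A ≤ ENNReal.ofReal s := Metric.mem_cthickening_iff.mp hx
      have h2 : EMetric.infEdist x A < ENNReal.ofReal t :=
        lt_of_le_of_lt h1 ((ENNReal.ofReal_lt_ofReal_iff ht).mpr hst)
      obtain ⟨a, haA, hd⟩ := EMetric.infEdist_lt_iff.mp h2
      have hdist : dist x a < t := by rwa [edist_lt_ofReal] at hd
      refine Set.mem_add.mpr ⟨a, haA, x - a, ?_, by abel⟩
      refine Set.mem_smul_set.mpr ⟨(1/t) • (x - a), ?_, ?_⟩
      · rw [Metric.mem_closedBall, dist_zero_right, norm_smul, Real.norm_eq_abs,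
          abs_of_pos (by positivity : (0:ℝ) < 1/t)]
        rw [← dist_eq_norm] at *
        rw [div_mul_eq_mul_div, one_mul, div_le_one ht]
        exact hdist.le
      · rw [smul_smul]
        rw [mul_one_div, div_self ht.ne', one_smul]
    have h3 := htr _ _ hincl2
    have h4 := hkey s hs
    have h5 : (1 - (μ (Metric.cthickening 0 A)).toReal) * Real.exp (-(h / 2 * s))
        ≤ 1 * Real.exp (-(h / 2 * s)) :=
      mul_le_mul_of_nonneg_right hG0 (Real.exp_pos _).le
    rw [one_mul] at h5
    linarith
  have hexp : -((1:ℝ)/2 * h * t) = -(h / 2 * t) := by ring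
  rw [hexp]
  have htend : Tendsto (fun s : ℝ => 1 - Real.exp (-(h / 2 * s)))
      (nhdsWithin t (Set.Iio t)) (𝓝 (1 - Real.exp (-(h / 2 * t)))) := by
    apply Tendsto.mono_left _ nhdsWithin_le_nhds
    exact Continuous.tendsto (by continuity) t
  have hev : ∀ᶠ s in nhdsWithin t (Set.Iio t),
      (fun s : ℝ => 1 - Real.exp (-(h / 2 * s))) s
        ≤ (μ (A + t • Metric.closedBall (0 : EuclideanSpace ℝ (Fin n)) 1)).toReal := by
    filter_upwards [Ioo_mem_nhdsLT_of_mem (⟨ht, le_refl t⟩ : t ∈ Set.Ioc (0:ℝ) t)]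
      with s hs
    exact hsup s hs.1.le hs.2
  exact le_of_tendsto htend hev
end
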